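/- arXiv:1907.10927 — 3 statements merged into one kernel-verified Lean document; each statement's English description precedes it below -/
import Mathlib

section
/- For 0 < γ < 1, the Caputo fractional derivative of an interior B-spline basis function B_{n,ℓ}(t) = B_n(t-ℓ) with ℓ ≥ 0 is given by D_t^γ B_{n,ℓ}(t) = (1/Γ(n-γ+1)) Σ_{r=0}^{n+1} binom(n+1,r)(-1)^r T_{n-γ}(t-ℓ-r) for t > 0. -/
noncomputable def caputoDeriv (γ : ℝ) (x : ℝ → ℝ) (t : ℝ) : ℝ :=
  (1 / Real.Gamma (1 - γ)) * ∫ τ in (0:ℝ)..t, deriv x τ * (t - τ) ^ (-γ)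

noncomputable def cardinalBSpline (n : ℕ) (t : ℝ) : ℝ :=
  (1 / (n.factorial : ℝ)) * ∑ r ∈ Finset.range (n + 2),
    ((-1 : ℝ) ^ r * ((n + 1).choose r : ℝ)) * (max 0 (t - r)) ^ n

/-- Fractional truncated power `T_β(s) = (max(0,s))^β`. -/
noncomputable def truncPow (β : ℝ) (s : ℝ) : ℝ := (max 0 s) ^ β

open intervalIntegral MeasureTheory


lemma real_betaIntegral {a b : ℝ} (ha : 0 < a) (hb : 0 < b) :
    ∫ x in (0:ℝ)..1, x ^ (a-1) * (1-x) ^ (b-1)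
      = Real.Gamma a * Real.Gamma b / Real.Gamma (a+b) := by
  have key : Complex.betaIntegral a b
      = ((∫ x in (0:ℝ)..1, x ^ (a-1) * (1-x) ^ (b-1) : ℝ) : ℂ) := by
    rw [Complex.betaIntegral, ← intervalIntegral.integral_ofReal]
    refine intervalIntegral.integral_congr fun x hx => ?_
    rw [Set.uIcc_of_le (by norm_num : (0:ℝ) ≤ 1)] at hx
    rw [Complex.ofReal_mul, Complex.ofReal_cpow hx.1, Complex.ofReal_cpow (by linarith [hx.2])]
    push_cast
    ring
  have h := Complex.Gamma_mul_Gamma_eq_betaIntegral (s := a) (t := b)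
    (by simpa using ha) (by simpa using hb)
  rw [key] at h
  have h3 : Real.Gamma a * Real.Gamma b
      = Real.Gamma (a+b) * ∫ x in (0:ℝ)..1, x ^ (a-1) * (1-x) ^ (b-1) := by
    exact_mod_cast (by simpa [← Complex.Gamma_ofReal, Complex.ofReal_add] using h :
      ((Real.Gamma a * Real.Gamma b : ℝ) : ℂ)
        = ((Real.Gamma (a+b) * ∫ x in (0:ℝ)..1, x ^ (a-1) * (1-x) ^ (b-1) : ℝ) : ℂ))
  have hg : Real.Gamma (a+b) ≠ 0 := (Real.Gamma_pos_of_pos (by linarith)).ne'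
  field_simp
  linarith [h3]


lemma hasDerivAt_truncpow (a : ℝ) {n : ℕ} (hn : 1 ≤ n) {τ : ℝ} (hτ : τ ≠ a) :
    HasDerivAt (fun s => (max 0 (s - a))^n)
      (if a < τ then (n:ℝ)*(τ-a)^(n-1) else 0) τ := by
  rcases lt_or_gt_of_ne hτ with h | h
  · rw [if_neg (not_lt.2 h.le)]
    refine (hasDerivAt_const τ (0:ℝ)).congr_of_eventuallyEq ?_
    filter_upwards [eventually_lt_nhds h] with s hs
    rw [max_eq_left (by linarith), zero_pow (by omega)]
  · rw [if_pos h]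
    have h1 : HasDerivAt (fun s : ℝ => (s - a)^n) ((n:ℝ)*(τ-a)^(n-1)) τ := by
      simpa [Function.comp_def] using ((hasDerivAt_pow n (τ-a)).comp τ ((hasDerivAt_id τ).sub_const a))
    refine h1.congr_of_eventuallyEq ?_
    filter_upwards [eventually_gt_nhds h] with s hs
    rw [max_eq_right (by linarith)]

lemma integrable_base {γ : ℝ} (hγ₂ : γ < 1) (t : ℝ) :
    IntervalIntegrable (fun τ => (t - τ)^(-γ)) volume 0 t := by
  have h := (intervalIntegrable_rpow' (show (-1:ℝ) < -γ by linarith)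
    (a := 0) (b := t)).comp_sub_left t
  simpa using h.symm

lemma integrable_piece {n : ℕ} {γ : ℝ} (hγ₂ : γ < 1) {t : ℝ} (ht : 0 < t)
    {a : ℝ} (ha : 0 ≤ a) :
    IntervalIntegrable
      (fun τ => (if a < τ then (n:ℝ)*(τ-a)^(n-1) else 0) * (t - τ)^(-γ)) volume 0 t := by
  refine ((integrable_base hγ₂ t).const_mul ((n:ℝ)*t^(n-1))).mono_fun ?_ ?_
  · exact (Measurable.aestronglyMeasurable (Measurable.ite measurableSet_Ioi
        (((measurable_id.sub_const a).pow_const _).const_mul _) measurable_const)).mul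
      (integrable_base hγ₂ t).def'.aestronglyMeasurable
  · rw [Filter.EventuallyLE, ae_restrict_iff' measurableSet_uIoc]
    refine Filter.Eventually.of_forall fun τ hτ => ?_
    rw [Set.uIoc_of_le ht.le] at hτ
    have h1 : (0:ℝ) ≤ (t - τ)^(-γ) := Real.rpow_nonneg (by linarith [hτ.2]) _
    have h2 : |if a < τ then (n:ℝ)*(τ-a)^(n-1) else 0| ≤ (n:ℝ)*t^(n-1) := by
      split_ifs with hc
      · rw [abs_of_nonneg (mul_nonneg (Nat.cast_nonneg n) (pow_nonneg (by linarith) _))]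
        have h3 : (τ - a)^(n-1) ≤ t^(n-1) :=
          pow_le_pow_left₀ (by linarith) (by linarith [hτ.2]) _
        have h4 : (0:ℝ) ≤ (n:ℝ) := Nat.cast_nonneg n
        nlinarith
      · rw [abs_zero]
        have h4 : (0:ℝ) ≤ (n:ℝ) := Nat.cast_nonneg n
        have h5 : (0:ℝ) ≤ t^(n-1) := by positivity
        nlinarith
    have h6 : (0:ℝ) ≤ (n:ℝ)*t^(n-1) := by positivity
    calc ‖(if a < τ then (n:ℝ)*(τ-a)^(n-1) else 0) * (t - τ)^(-γ)‖
        = |if a < τ then (n:ℝ)*(τ-a)^(n-1) else 0| * (t - τ)^(-γ) := by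
          rw [norm_mul, Real.norm_eq_abs, Real.norm_eq_abs, abs_of_nonneg h1]
      _ ≤ ((n:ℝ)*t^(n-1)) * (t - τ)^(-γ) := mul_le_mul_of_nonneg_right h2 h1
      _ = ‖(n:ℝ)*t^(n-1) * (t - τ)^(-γ)‖ := by
          rw [Real.norm_eq_abs, abs_of_nonneg (mul_nonneg h6 h1)]

lemma natpow_eq_rpow {u : ℝ} (hu : 0 ≤ u) {n : ℕ} (hn : 1 ≤ n) :
    u ^ (n - 1) = u ^ ((n:ℝ) - 1) := by
  rcases eq_or_lt_of_le hu with h | h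
  · rcases Nat.eq_or_lt_of_le hn with h1 | h1
    · simp [← h, ← h1]
    · have hn1 : (1:ℝ) < n := by exact_mod_cast h1
      rw [← h, Real.zero_rpow (by intro hc; linarith : (n:ℝ) - 1 ≠ 0), zero_pow (by omega)]
  · rw [← Real.rpow_natCast u (n-1)]
    congr 1
    push_cast [Nat.cast_sub hn]
    ring

lemma key_integral {n : ℕ} (hn : 1 ≤ n) {γ : ℝ} (hγ₁ : 0 < γ) (hγ₂ : γ < 1)
    {a t : ℝ} (hat : a < t) :
    ∫ τ in a..t, (n:ℝ) * (τ - a) ^ (n-1) * (t - τ) ^ (-γ)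
      = (n.factorial : ℝ) * Real.Gamma (1-γ) / Real.Gamma ((n:ℝ) - γ + 1)
        * (t-a) ^ ((n:ℝ) - γ) := by
  have hta : (0:ℝ) < t - a := by linarith
  have h := intervalIntegral.integral_comp_mul_add
    (f := fun τ => (n:ℝ) * (τ - a) ^ (n-1) * (t - τ) ^ (-γ)) (a := 0) (b := 1)
    (c := t - a) hta.ne' a
  simp only [mul_zero, zero_add, mul_one, sub_add_cancel, smul_eq_mul] at h
  have h2 : (t - a) * ∫ u in (0:ℝ)..1,
      (n:ℝ) * ((t-a)*u + a - a) ^ (n-1) * (t - ((t-a)*u + a)) ^ (-γ)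
      = ∫ τ in a..t, (n:ℝ) * (τ - a) ^ (n-1) * (t - τ) ^ (-γ) := by
    rw [h]; field_simp
  rw [← h2]
  have h3 : ∫ u in (0:ℝ)..1,
      (n:ℝ) * ((t-a)*u + a - a) ^ (n-1) * (t - ((t-a)*u + a)) ^ (-γ)
      = ((n:ℝ) * (t-a)^(n-1) * (t-a) ^ (-γ)) *
        ∫ u in (0:ℝ)..1, u ^ ((n:ℝ)-1) * (1-u) ^ ((1-γ)-1) := by
    rw [← intervalIntegral.integral_const_mul]
    refine intervalIntegral.integral_congr fun u hu => ?_
    rw [Set.uIcc_of_le (by norm_num : (0:ℝ) ≤ 1)] at hu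
    have h1u : (0:ℝ) ≤ 1 - u := by linarith [hu.2]
    have e1 : (t-a)*u + a - a = (t-a)*u := by ring
    have e2 : t - ((t-a)*u + a) = (t-a)*(1-u) := by ring
    rw [e1, e2, mul_pow, Real.mul_rpow hta.le h1u,
      natpow_eq_rpow (by positivity) hn, natpow_eq_rpow hu.1 hn]
    have : (1-γ) - 1 = -γ := by ring
    rw [this]
    ring
  rw [h3, real_betaIntegral (by exact_mod_cast hn : (0:ℝ) < n) (by linarith : (0:ℝ) < 1 - γ)]
  have hgam : Real.Gamma (n:ℝ) = ((n-1).factorial : ℝ) := by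
    rw [show (n:ℝ) = ((n-1:ℕ):ℝ) + 1 by push_cast [Nat.cast_sub hn]; ring,
      Real.Gamma_nat_eq_factorial]
  have hfac : (n:ℝ) * ((n-1).factorial : ℝ) = (n.factorial : ℝ) := by
    rw [← Nat.cast_mul, Nat.mul_factorial_pred (by omega)]
  have hpow : (t-a) * ((t-a)^(n-1) * (t-a)^(-γ)) = (t-a) ^ ((n:ℝ) - γ) := by
    rw [natpow_eq_rpow hta.le hn, ← Real.rpow_add hta,
      show (t-a) * (t-a) ^ ((n:ℝ) - 1 + -γ) = (t-a)^(1:ℝ) * (t-a) ^ ((n:ℝ) - 1 + -γ) by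
        rw [Real.rpow_one], ← Real.rpow_add hta]
    congr 1; ring
  have heq : (n:ℝ) + (1 - γ) = (n:ℝ) - γ + 1 := by ring
  rw [heq, hgam]
  linear_combination ((n:ℝ) * ((n-1).factorial:ℝ) * Real.Gamma (1-γ) / Real.Gamma ((n:ℝ)-γ+1)) * hpow
    + (Real.Gamma (1-γ) / Real.Gamma ((n:ℝ)-γ+1) * (t-a)^((n:ℝ)-γ)) * hfac

lemma piece_integral {n : ℕ} (hn : 1 ≤ n) {γ : ℝ} (hγ₁ : 0 < γ) (hγ₂ : γ < 1)
    {t : ℝ} (ht : 0 < t) {a : ℝ} (ha : 0 ≤ a) :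
    ∫ τ in (0:ℝ)..t, (if a < τ then (n:ℝ)*(τ-a)^(n-1) else 0) * (t - τ)^(-γ)
      = (n.factorial : ℝ) * Real.Gamma (1-γ) / Real.Gamma ((n:ℝ) - γ + 1)
        * (max 0 (t - a)) ^ ((n:ℝ) - γ) := by
  have hnγ : (n:ℝ) - γ ≠ 0 := by
    have : (1:ℝ) ≤ n := by exact_mod_cast hn
    intro hc; linarith
  rcases le_or_gt t a with h | h
  · rw [max_eq_left (by linarith), Real.zero_rpow hnγ, mul_zero]
    rw [show (∫ τ in (0:ℝ)..t, (if a < τ then (n:ℝ)*(τ-a)^(n-1) else 0) * (t - τ)^(-γ))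
        = ∫ τ in (0:ℝ)..t, (0:ℝ) from intervalIntegral.integral_congr fun τ hτ => by
      rw [Set.uIcc_of_le ht.le] at hτ
      rw [if_neg (by push_neg; linarith [hτ.2]), zero_mul]]
    simp
  · rw [max_eq_right (by linarith)]
    have hint := integrable_piece (n := n) hγ₂ ht ha
    have hsub1 : Set.uIcc (0:ℝ) a ⊆ Set.uIcc (0:ℝ) t := by
      rw [Set.uIcc_of_le ha, Set.uIcc_of_le ht.le]
      exact Set.Icc_subset_Icc le_rfl h.le
    have hsub2 : Set.uIcc a t ⊆ Set.uIcc (0:ℝ) t := by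
      rw [Set.uIcc_of_le h.le, Set.uIcc_of_le ht.le]
      exact Set.Icc_subset_Icc ha le_rfl
    have h1 := hint.mono_set hsub1
    have h2 := hint.mono_set hsub2
    rw [← intervalIntegral.integral_add_adjacent_intervals h1 h2]
    have e1 : (∫ τ in (0:ℝ)..a, (if a < τ then (n:ℝ)*(τ-a)^(n-1) else 0) * (t - τ)^(-γ)) = 0 := by
      rw [show (∫ τ in (0:ℝ)..a, (if a < τ then (n:ℝ)*(τ-a)^(n-1) else 0) * (t - τ)^(-γ))
          = ∫ τ in (0:ℝ)..a, (0:ℝ) from intervalIntegral.integral_congr fun τ hτ => by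
        rw [Set.uIcc_of_le ha] at hτ
        rw [if_neg (by push_neg; linarith [hτ.2]), zero_mul]]
      simp
    have e2 : (∫ τ in a..t, (if a < τ then (n:ℝ)*(τ-a)^(n-1) else 0) * (t - τ)^(-γ))
        = ∫ τ in a..t, (n:ℝ) * (τ - a) ^ (n-1) * (t - τ) ^ (-γ) := by
      refine intervalIntegral.integral_congr_ae ?_
      refine Filter.Eventually.of_forall fun τ hτ => ?_
      rw [Set.uIoc_of_le h.le] at hτ
      rw [if_pos hτ.1]
    rw [e1, e2, key_integral hn hγ₁ hγ₂ h, zero_add]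

/-- Caputo derivative of an interior B-spline basis function `B_{n,ℓ}` with `ℓ ≥ 0`. -/
theorem caputoDeriv_interior_BSpline (n : ℕ) (hn : 1 ≤ n) (γ : ℝ)
    (hγ₁ : 0 < γ) (hγ₂ : γ < 1) (ℓ : ℕ) (t : ℝ) (ht : 0 < t) :
    caputoDeriv γ (fun s => cardinalBSpline n (s - ℓ)) t
      = (1 / Real.Gamma ((n : ℝ) - γ + 1)) * ∑ r ∈ Finset.range (n + 2),
          ((-1 : ℝ) ^ r * ((n + 1).choose r : ℝ)) *
            truncPow ((n : ℝ) - γ) (t - ℓ - r) := by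
  set c : ℕ → ℝ := fun r => ((-1 : ℝ) ^ r * ((n + 1).choose r : ℝ)) with hc
  set d : ℕ → ℝ → ℝ := fun r τ =>
    (if (ℓ:ℝ) + r < τ then (n:ℝ)*(τ-((ℓ:ℝ)+r))^(n-1) else 0) with hd
  -- derivative off the kink set
  have hx : ∀ τ : ℝ, (∀ r ∈ Finset.range (n+2), τ ≠ (ℓ:ℝ) + r) →
      HasDerivAt (fun s => cardinalBSpline n (s - ℓ))
        ((1 / (n.factorial : ℝ)) * ∑ r ∈ Finset.range (n+2), c r * d r τ) τ := by
    intro τ hτ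
    have : HasDerivAt (fun s => (1 / (n.factorial : ℝ)) *
        ∑ r ∈ Finset.range (n+2), c r * (max 0 (s - ((ℓ:ℝ) + r)))^n)
        ((1 / (n.factorial : ℝ)) * ∑ r ∈ Finset.range (n+2), c r * d r τ) τ := by
      refine HasDerivAt.const_mul _ ?_
      refine HasDerivAt.fun_sum fun r hr => ?_
      exact (hasDerivAt_truncpow ((ℓ:ℝ) + r) hn (hτ r hr)).const_mul (c r)
    simpa only [cardinalBSpline, sub_sub] using this
  -- the kink set has measure zero
  have hB : volume ((fun r : ℕ => ((ℓ:ℝ) + r)) '' (Finset.range (n+2) : Set ℕ)) = 0 :=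
    (((Finset.range (n+2)).finite_toSet.image _)).measure_zero volume
  have hae : ∀ᵐ τ ∂(volume : Measure ℝ),
      deriv (fun s => cardinalBSpline n (s - ℓ)) τ * (t - τ) ^ (-γ)
        = ∑ r ∈ Finset.range (n+2), ((1 / (n.factorial : ℝ)) * c r) *
            (d r τ * (t - τ) ^ (-γ)) := by
    filter_upwards [measure_eq_zero_iff_ae_notMem.mp hB] with τ hτ
    have hne : ∀ r ∈ Finset.range (n+2), τ ≠ (ℓ:ℝ) + r := by
      intro r hr hcontra
      exact hτ ⟨r, by simpa using hr, hcontra.symm⟩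
    rw [(hx τ hne).deriv, mul_comm (1 / (n.factorial:ℝ)), Finset.sum_mul, Finset.sum_mul]
    exact Finset.sum_congr rfl fun r _ => by ring
  -- compute
  have hint : ∀ r ∈ Finset.range (n+2), IntervalIntegrable
      (fun τ => ((1 / (n.factorial : ℝ)) * c r) * (d r τ * (t - τ) ^ (-γ))) volume 0 t := by
    intro r _
    exact (integrable_piece hγ₂ ht (by positivity : (0:ℝ) ≤ (ℓ:ℝ) + r)).const_mul _
  rw [caputoDeriv, intervalIntegral.integral_congr_ae
      (hae.mono fun τ h _ => h),
    intervalIntegral.integral_finset_sum hint]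
  have hval : ∀ r ∈ Finset.range (n+2),
      (∫ τ in (0:ℝ)..t, ((1 / (n.factorial : ℝ)) * c r) * (d r τ * (t - τ) ^ (-γ)))
        = ((1 / (n.factorial : ℝ)) * c r) *
          ((n.factorial : ℝ) * Real.Gamma (1-γ) / Real.Gamma ((n:ℝ) - γ + 1)
            * (max 0 (t - ((ℓ:ℝ)+r))) ^ ((n:ℝ) - γ)) := by
    intro r _
    rw [intervalIntegral.integral_const_mul,
      piece_integral hn hγ₁ hγ₂ ht (by positivity : (0:ℝ) ≤ (ℓ:ℝ) + r)]
  rw [Finset.sum_congr rfl hval, Finset.mul_sum, Finset.mul_sum]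
  refine Finset.sum_congr rfl fun r _ => ?_
  have hΓ1 : Real.Gamma (1-γ) ≠ 0 := (Real.Gamma_pos_of_pos (by linarith)).ne'
  have hΓ2 : Real.Gamma ((n:ℝ) - γ + 1) ≠ 0 := by
    refine (Real.Gamma_pos_of_pos ?_).ne'
    have : (1:ℝ) ≤ n := by exact_mod_cast hn
    linarith
  have hfac : (n.factorial : ℝ) ≠ 0 := by positivity
  rw [truncPow, sub_sub]
  field_simp
  ring
end

section
/- For 0 < γ < 1 and -n ≤ ℓ ≤ -1, the Caputo fractional derivative of the left-edge B-spline B_{n,ℓ}(t) = B_n(t-ℓ) on [0,∞) satisfies D_t^γ B_{n,ℓ}(t) = (1/Γ(n+1-γ)) Δ^{n+1} T_{n-γ}(t-ℓ) − (1/Γ(1-γ)) ∫_0^{-ℓ} B_n'(τ)(t-ℓ-τ)^{-γ} dτ for t > 0. -/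
open intervalIntegral MeasureTheory Set

set_option maxHeartbeats 1000000

noncomputable def tder (n r : ℕ) (u : ℝ) : ℝ :=
  if (r:ℝ) < u then (n:ℝ) * (u - r) ^ (n-1) else 0

lemma hasDerivAt_trunc (n r : ℕ) (hn : 1 ≤ n) {u : ℝ} (hu : u ≠ (r:ℝ)) :
    HasDerivAt (fun v => (max 0 (v - (r:ℝ))) ^ n) (tder n r u) u := by
  rcases lt_or_gt_of_ne hu with h | h
  · have hev : (fun v => (max 0 (v - (r:ℝ))) ^ n) =ᶠ[nhds u] (fun _ => (0:ℝ)) := by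
      filter_upwards [Iio_mem_nhds h] with v hv
      rw [max_eq_left (by simp only [Set.mem_Iio] at hv; linarith)]
      exact zero_pow (by omega)
    have : tder n r u = 0 := by simp [tder, not_lt.mpr h.le]
    rw [this]
    exact (hasDerivAt_const u 0).congr_of_eventuallyEq hev
  · have hd : HasDerivAt (fun v => (v - (r:ℝ)) ^ n) ((n:ℝ) * (u - r) ^ (n-1) * 1) u :=
      ((hasDerivAt_id u).sub_const (r:ℝ)).pow n
    have hev : (fun v => (max 0 (v - (r:ℝ))) ^ n) =ᶠ[nhds u] (fun v => (v - (r:ℝ)) ^ n) := by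
      filter_upwards [Ioi_mem_nhds h] with v hv
      rw [max_eq_right (by simp only [Set.mem_Ioi] at hv; linarith)]
    have : tder n r u = (n:ℝ) * (u - r) ^ (n-1) * 1 := by simp [tder, h]
    rw [this]
    exact hd.congr_of_eventuallyEq hev

lemma deriv_cardinalBSpline_eq (n : ℕ) (hn : 1 ≤ n) {u : ℝ}
    (hu : ∀ r ∈ Finset.range (n+2), u ≠ (r:ℝ)) :
    deriv (cardinalBSpline n) u = (1 / (n.factorial : ℝ)) * ∑ r ∈ Finset.range (n+2),
      ((-1:ℝ)^r * ((n+1).choose r : ℝ)) * tder n r u := by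
  have hsum : HasDerivAt (fun v => ∑ r ∈ Finset.range (n+2),
      ((-1:ℝ)^r * ((n+1).choose r : ℝ)) * (max 0 (v - (r:ℝ))) ^ n)
      (∑ r ∈ Finset.range (n+2), ((-1:ℝ)^r * ((n+1).choose r : ℝ)) * tder n r u) u :=
    HasDerivAt.fun_sum fun r hr => (hasDerivAt_trunc n r hn (hu r hr)).const_mul _
  exact (hsum.const_mul _).deriv

lemma integrable_tder_kernel (n r : ℕ) {γ : ℝ} (hγ₂ : γ < 1) {a b c : ℝ}
    (hac : a ≤ c) (hbc : b ≤ c) :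
    IntervalIntegrable (fun u => tder n r u * (c - u) ^ (-γ)) volume a b := by
  have hker : IntervalIntegrable (fun u => (c - u) ^ (-γ)) volume a b := by
    have h := (intervalIntegrable_rpow' (a := c - a) (b := c - b)
      (by linarith : (-1:ℝ) < -γ)).comp_sub_left c
    simpa using h
  set M := (n:ℝ) * (|a| + |b| + 1) ^ (n-1) with hM
  have hM0 : 0 ≤ M := by positivity
  refine IntervalIntegrable.mono_fun' (g := fun u => M * (c - u) ^ (-γ))
    (hker.const_mul M) ?_ ?_
  · have hm : Measurable (fun u => tder n r u * (c - u) ^ (-γ)) := by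
      apply Measurable.mul
      · exact Measurable.ite measurableSet_Ioi
          (((measurable_id.sub_const _).pow_const _).const_mul _) measurable_const
      · fun_prop
    exact hm.aestronglyMeasurable
  · filter_upwards [ae_restrict_mem measurableSet_uIoc] with u hu
    have huc : u ≤ c := le_trans hu.2 (max_le hac hbc)
    have hk0 : 0 ≤ (c - u) ^ (-γ) := Real.rpow_nonneg (by linarith) _
    have htd : |tder n r u| ≤ M := by
      by_cases h : (r:ℝ) < u
      · have h1 : 0 ≤ u - (r:ℝ) := by linarith
        have h2 : u - (r:ℝ) ≤ |a| + |b| + 1 := by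
          have : u ≤ max a b := hu.2
          have : u ≤ |a| + |b| + 1 := by
            rcases max_cases a b with ⟨he, _⟩ | ⟨he, _⟩ <;>
              [ (have := le_abs_self a); (have := le_abs_self b) ] <;>
              [ (have := abs_nonneg b); (have := abs_nonneg a) ] <;> linarith
          have hr0 : (0:ℝ) ≤ r := Nat.cast_nonneg r
          linarith
        rw [tder, if_pos h, abs_of_nonneg (by positivity), hM]
        exact mul_le_mul_of_nonneg_left (pow_le_pow_left₀ h1 h2 _) (Nat.cast_nonneg n)
      · rw [tder, if_neg h, abs_zero]; exact hM0
    calc ‖tder n r u * (c - u) ^ (-γ)‖ = |tder n r u| * (c - u) ^ (-γ) := by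
          rw [norm_mul, Real.norm_eq_abs, Real.norm_eq_abs, abs_of_nonneg hk0]
      _ ≤ M * (c - u) ^ (-γ) := mul_le_mul_of_nonneg_right htd hk0

lemma beta_core (n : ℕ) (hn : 1 ≤ n) {γ : ℝ} (hγ₂ : γ < 1) {c : ℝ} (hc : 0 < c) :
    ∫ u in (0:ℝ)..c, (n:ℝ) * u ^ (n-1) * (c-u) ^ (-γ)
      = ((n.factorial : ℝ) * Real.Gamma (1-γ) / Real.Gamma ((n:ℝ)+1-γ)) * c ^ ((n:ℝ)-γ) := by
  have h1γ : (0:ℝ) < 1 - γ := by linarith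
  have hsc := Complex.betaIntegral_scaled (n:ℂ) (1 - (γ:ℝ)) hc
  have hbeta := Complex.Gamma_mul_Gamma_eq_betaIntegral (s := (n:ℂ)) (t := 1 - (γ:ℝ))
    (by simp; exact_mod_cast Nat.lt_of_lt_of_le Nat.zero_lt_one hn)
    (by simp [Complex.sub_re]; linarith)
  -- left side of hsc equals ofReal J
  have hL : (∫ x in (0:ℝ)..c, (x:ℂ) ^ ((n:ℂ) - 1) * ((c:ℂ) - x) ^ ((1 - (γ:ℝ):ℂ) - 1))
      = ((∫ u in (0:ℝ)..c, u ^ (n-1) * (c-u) ^ (-γ) : ℝ) : ℂ) := by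
    rw [← intervalIntegral.integral_ofReal]
    apply intervalIntegral.integral_congr
    intro x hx
    rw [Set.uIcc_of_le hc.le] at hx
    obtain ⟨hx0, hxc⟩ := hx
    have e1 : ((n:ℂ) - 1) = ((n - 1 : ℕ) : ℂ) := by
      push_cast [Nat.cast_sub hn]; ring
    have e2 : ((1 - (γ:ℝ) : ℂ) - 1) = ((-γ : ℝ) : ℂ) := by push_cast; ring
    beta_reduce
    rw [e1, e2, Complex.cpow_natCast, ← Complex.ofReal_sub,
      ← Complex.ofReal_cpow (by linarith : (0:ℝ) ≤ c - x), Complex.ofReal_mul, Complex.ofReal_pow]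
  have hΓpos : 0 < Real.Gamma ((n:ℝ)+1-γ) := Real.Gamma_pos_of_pos
    (by have h0 : (0:ℝ) ≤ n := Nat.cast_nonneg n; linarith)
  have hΓn : Real.Gamma (n:ℝ) = ((n-1).factorial : ℝ) := by
    have : ((n:ℝ)) = ((n-1:ℕ):ℝ) + 1 := by
      push_cast [Nat.cast_sub hn]; ring
    rw [this, Real.Gamma_nat_eq_factorial]
  have e3 : ((n:ℂ) + (1 - (γ:ℝ):ℂ)) = (((n:ℝ)+1-γ : ℝ) : ℂ) := by push_cast; ring
  have e4 : ((n:ℂ)) = (((n:ℝ)):ℂ) := by push_cast; ring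
  have e5 : ((1:ℂ) - (γ:ℝ)) = (((1-γ:ℝ)):ℂ) := by push_cast; ring
  have e6 : ((((n:ℝ)):ℂ) + (((1-γ:ℝ)):ℂ) - 1) = (((n:ℝ)-γ : ℝ) : ℂ) := by push_cast; ring
  rw [e3, e4, e5, Complex.Gamma_ofReal, Complex.Gamma_ofReal, Complex.Gamma_ofReal] at hbeta
  have hbne : ((Real.Gamma ((n:ℝ)+1-γ) : ℝ) : ℂ) ≠ 0 :=
    Complex.ofReal_ne_zero.mpr hΓpos.ne'
  have hbval : Complex.betaIntegral (((n:ℝ)):ℂ) (((1-γ:ℝ)):ℂ) =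
      ((Real.Gamma (n:ℝ) * Real.Gamma (1-γ) / Real.Gamma ((n:ℝ)+1-γ) : ℝ) : ℂ) := by
    rw [Complex.ofReal_div, Complex.ofReal_mul, eq_div_iff hbne, mul_comm]
    exact hbeta.symm
  rw [hL, e4, e5, hbval, e6, ← Complex.ofReal_cpow hc.le, ← Complex.ofReal_mul] at hsc
  have hJ : (∫ u in (0:ℝ)..c, u ^ (n-1) * (c-u) ^ (-γ))
      = c ^ ((n:ℝ)-γ) * (Real.Gamma (n:ℝ) * Real.Gamma (1-γ) / Real.Gamma ((n:ℝ)+1-γ)) :=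
    Complex.ofReal_injective hsc
  have : ∫ u in (0:ℝ)..c, (n:ℝ) * u ^ (n-1) * (c-u) ^ (-γ)
      = (n:ℝ) * ∫ u in (0:ℝ)..c, u ^ (n-1) * (c-u) ^ (-γ) := by
    rw [← intervalIntegral.integral_const_mul]
    congr 1; ext u; ring
  rw [this, hJ, hΓn]
  have hfac : (n:ℝ) * ((n-1).factorial : ℝ) = (n.factorial : ℝ) := by
    rw [← Nat.cast_mul]
    congr 1
    calc n * (n-1).factorial = ((n-1)+1) * (n-1).factorial := by
          congr 1; omega
      _ = ((n-1)+1).factorial := (Nat.factorial_succ _).symm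
      _ = n.factorial := by congr 1; omega
  rw [← hfac]
  ring

lemma core_integral (n : ℕ) (hn : 1 ≤ n) {γ : ℝ} (hγ₁ : 0 < γ) (hγ₂ : γ < 1) (r : ℕ)
    {x : ℝ} (hx : 0 < x) :
    ∫ u in (0:ℝ)..x, tder n r u * (x - u) ^ (-γ)
      = ((n.factorial : ℝ) * Real.Gamma (1-γ) / Real.Gamma ((n:ℝ)+1-γ)) *
          (max 0 (x - r)) ^ ((n:ℝ)-γ) := by
  have hnγ : (0:ℝ) < (n:ℝ) - γ := by
    have : (1:ℝ) ≤ n := by exact_mod_cast hn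
    linarith
  rcases le_or_gt x (r:ℝ) with hxr | hrx
  · have h0 : (max 0 (x - (r:ℝ))) ^ ((n:ℝ)-γ) = 0 := by
      rw [max_eq_left (by linarith), Real.zero_rpow hnγ.ne']
    rw [h0, mul_zero]
    have hz : Set.EqOn (fun u => tder n r u * (x - u) ^ (-γ)) 0 (Set.uIcc 0 x) := by
      intro u hu
      rw [Set.uIcc_of_le hx.le] at hu
      simp [tder, not_lt.mpr (le_trans hu.2 hxr)]
    rw [intervalIntegral.integral_congr hz]; simp
  · have hint1 : IntervalIntegrable (fun u => tder n r u * (x - u) ^ (-γ)) volume 0 (r:ℝ) :=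
      integrable_tder_kernel n r hγ₂ hx.le hrx.le
    have hint2 : IntervalIntegrable (fun u => tder n r u * (x - u) ^ (-γ)) volume (r:ℝ) x :=
      integrable_tder_kernel n r hγ₂ hrx.le le_rfl
    rw [← intervalIntegral.integral_add_adjacent_intervals hint1 hint2]
    have hz : ∫ u in (0:ℝ)..(r:ℝ), tder n r u * (x - u) ^ (-γ) = 0 := by
      have he : Set.EqOn (fun u => tder n r u * (x - u) ^ (-γ)) 0 (Set.uIcc 0 (r:ℝ)) := by
        intro u hu
        rw [Set.uIcc_of_le (Nat.cast_nonneg r)] at hu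
        simp [tder, not_lt.mpr hu.2]
      rw [intervalIntegral.integral_congr he]; simp
    rw [hz, zero_add]
    have hcong : ∫ u in (r:ℝ)..x, tder n r u * (x - u) ^ (-γ)
        = ∫ u in (r:ℝ)..x,
            (fun v => (n:ℝ) * v ^ (n-1) * ((x - r) - v) ^ (-γ)) (u - (r:ℝ)) := by
      apply intervalIntegral.integral_congr_ae
      apply Filter.Eventually.of_forall
      intro u hu
      rw [Set.uIoc_of_le hrx.le] at hu
      have h1 : (r:ℝ) < u := hu.1
      have h2 : (x - (r:ℝ)) - (u - (r:ℝ)) = x - u := by ring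
      simp only [tder, if_pos h1, h2]
    have hcomp := intervalIntegral.integral_comp_sub_right (a := (r:ℝ)) (b := x)
      (fun v => (n:ℝ) * v ^ (n-1) * ((x - r) - v) ^ (-γ)) (r:ℝ)
    rw [hcong, hcomp, sub_self,
      beta_core n hn hγ₂ (by linarith : (0:ℝ) < x - r),
      max_eq_right (by linarith : (0:ℝ) ≤ x - (r:ℝ))]


/-- Caputo derivative of a left-edge B-spline basis function `B_{n,ℓ}`, `-n ≤ ℓ ≤ -1`. -/
theorem caputoDeriv_leftEdge_BSpline (n : ℕ) (hn : 1 ≤ n) (γ : ℝ)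
    (hγ₁ : 0 < γ) (hγ₂ : γ < 1) (ℓ : ℤ) (hℓ₁ : -(n : ℤ) ≤ ℓ) (hℓ₂ : ℓ ≤ -1)
    (t : ℝ) (ht : 0 < t) :
    caputoDeriv γ (fun s => cardinalBSpline n (s - ℓ)) t
      = (1 / Real.Gamma ((n : ℝ) + 1 - γ)) * (∑ r ∈ Finset.range (n + 2),
          ((-1 : ℝ) ^ r * ((n + 1).choose r : ℝ)) *
            truncPow ((n : ℝ) - γ) (t - ℓ - r))
        - (1 / Real.Gamma (1 - γ)) *
            ∫ τ in (0:ℝ)..(-(ℓ : ℝ)),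
              deriv (cardinalBSpline n) τ * (t - ℓ - τ) ^ (-γ) := by
  have hℓr : (ℓ:ℝ) ≤ -1 := by exact_mod_cast hℓ₂
  have hx : (0:ℝ) < t - ℓ := by linarith
  have hnegl : (0:ℝ) < -(ℓ:ℝ) := by linarith
  set f : ℝ → ℝ := fun u => deriv (cardinalBSpline n) u * (t - ℓ - u) ^ (-γ) with hf
  set G : ℝ → ℝ := fun u => ∑ r ∈ Finset.range (n+2),
      ((1 / (n.factorial : ℝ)) * ((-1:ℝ)^r * ((n+1).choose r : ℝ))) *
        (tder n r u * (t - ℓ - u) ^ (-γ)) with hG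
  -- a.e. equality of f and G
  have hae : ∀ᵐ u ∂(volume : Measure ℝ), f u = G u := by
    set S : Finset ℝ := (Finset.range (n+2)).image (fun r : ℕ => (r:ℝ)) with hS
    have hS0 : volume (S : Set ℝ) = 0 := (S.finite_toSet).measure_zero _
    filter_upwards [measure_eq_zero_iff_ae_notMem.mp hS0] with u hu
    have hune : ∀ r ∈ Finset.range (n+2), u ≠ (r:ℝ) := by
      intro r hr heq
      exact hu (Finset.mem_image.mpr ⟨r, hr, heq.symm⟩)
    simp only [hf, hG, deriv_cardinalBSpline_eq n hn hune, Finset.sum_mul, Finset.mul_sum]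
    exact Finset.sum_congr rfl fun r _ => by ring
  have hGint : ∀ a b : ℝ, a ≤ t - ℓ → b ≤ t - ℓ → IntervalIntegrable G volume a b := by
    intro a b ha hb
    rw [hG]
    have hsum := IntervalIntegrable.sum (μ := volume) (a := a) (b := b)
      (Finset.range (n+2))
      (f := fun r u => ((1 / (n.factorial : ℝ)) * ((-1:ℝ)^r * ((n+1).choose r : ℝ))) *
        (tder n r u * (t - ℓ - u) ^ (-γ)))
      (fun r _ => (integrable_tder_kernel n r hγ₂ ha hb).const_mul _)
    have h2 : (∑ r ∈ Finset.range (n+2), fun u =>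
        ((1 / (n.factorial : ℝ)) * ((-1:ℝ)^r * ((n+1).choose r : ℝ))) *
          (tder n r u * (t - ℓ - u) ^ (-γ)))
        = (fun u => ∑ r ∈ Finset.range (n+2),
        ((1 / (n.factorial : ℝ)) * ((-1:ℝ)^r * ((n+1).choose r : ℝ))) *
          (tder n r u * (t - ℓ - u) ^ (-γ))) := by
      ext u
      simp [Finset.sum_apply]
    rwa [h2] at hsum
  have hfint : ∀ a b : ℝ, a ≤ t - ℓ → b ≤ t - ℓ → IntervalIntegrable f volume a b := by
    intro a b ha hb
    exact (hGint a b ha hb).congr_ae (ae_restrict_of_ae (hae.mono fun u h => h.symm))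
  -- rewrite the Caputo integral
  rw [caputoDeriv]
  have hstep : (∫ τ in (0:ℝ)..t, deriv (fun s => cardinalBSpline n (s - ℓ)) τ * (t - τ) ^ (-γ))
      = ∫ u in (-(ℓ:ℝ))..(t - ℓ), f u := by
    have h1 : ∀ τ : ℝ, deriv (fun s => cardinalBSpline n (s - (ℓ:ℝ))) τ * (t - τ) ^ (-γ)
        = f (τ - ℓ) := by
      intro τ
      rw [deriv_comp_sub_const, hf]
      have h2 : t - (ℓ:ℝ) - (τ - ℓ) = t - τ := by ring
      simp only [h2]
    simp only [h1]
    have h3 := intervalIntegral.integral_comp_sub_right (a := (0:ℝ)) (b := t) f (ℓ:ℝ)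
    rw [h3, zero_sub]
  rw [hstep,
    ← intervalIntegral.integral_add_adjacent_intervals
      (hfint (-(ℓ:ℝ)) 0 (by linarith) (by linarith)) (hfint 0 (t - ℓ) (by linarith) le_rfl),
    intervalIntegral.integral_symm (0:ℝ) (-(ℓ:ℝ))]
  have hmain : (∫ u in (0:ℝ)..(t - ℓ), f u)
      = ∑ r ∈ Finset.range (n+2),
          ((1 / (n.factorial : ℝ)) * ((-1:ℝ)^r * ((n+1).choose r : ℝ))) *
            (((n.factorial : ℝ) * Real.Gamma (1-γ) / Real.Gamma ((n:ℝ)+1-γ)) *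
              (max 0 (t - ℓ - r)) ^ ((n:ℝ)-γ)) := by
    rw [intervalIntegral.integral_congr_ae (hae.mono fun u h _ => h), hG,
      intervalIntegral.integral_finset_sum (fun r _ =>
        (integrable_tder_kernel n r hγ₂ hx.le le_rfl).const_mul _)]
    refine Finset.sum_congr rfl fun r _ => ?_
    rw [intervalIntegral.integral_const_mul, core_integral n hn hγ₁ hγ₂ r hx]
  rw [hmain]
  have hg0 : Real.Gamma (1 - γ) ≠ 0 := (Real.Gamma_pos_of_pos (by linarith)).ne'
  have hG0 : Real.Gamma ((n:ℝ) + 1 - γ) ≠ 0 := by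
    refine (Real.Gamma_pos_of_pos ?_).ne'
    have : (0:ℝ) ≤ n := Nat.cast_nonneg n
    linarith
  have hfac0 : ((n.factorial : ℝ)) ≠ 0 := Nat.cast_ne_zero.mpr n.factorial_ne_zero
  have hsummed : (1 / Real.Gamma (1 - γ)) * (∑ r ∈ Finset.range (n+2),
        ((1 / (n.factorial : ℝ)) * ((-1:ℝ)^r * ((n+1).choose r : ℝ))) *
          (((n.factorial : ℝ) * Real.Gamma (1-γ) / Real.Gamma ((n:ℝ)+1-γ)) *
            (max 0 (t - ℓ - r)) ^ ((n:ℝ)-γ)))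
      = (1 / Real.Gamma ((n:ℝ) + 1 - γ)) * (∑ r ∈ Finset.range (n + 2),
          ((-1 : ℝ) ^ r * ((n + 1).choose r : ℝ)) *
            truncPow ((n : ℝ) - γ) (t - ℓ - r)) := by
    rw [Finset.mul_sum, Finset.mul_sum]
    refine Finset.sum_congr rfl fun r _ => ?_
    rw [truncPow]
    field_simp
  rw [mul_add, hsummed]
  ring
end

section
/- The cardinal B-spline satisfies the two-scale (refinement) relation: B_n(t) = 2^{−n} Σ_{r=0}^{n+1} binom(n+1, r) B_n(2t − r) for all t ∈ ℝ. -/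
open Finset Polynomial

lemma coeff_one_sub_X_pow' (N j : ℕ) :
    ((1 - X : Polynomial ℝ) ^ N).coeff j = (-1 : ℝ) ^ j * (N.choose j : ℝ) := by
  have h : (1 - X : Polynomial ℝ) = C (-1) * (X + C (-1)) := by
    simp [mul_add, ← C_mul]
    ring
  rw [h, mul_pow, ← C_pow, coeff_C_mul, coeff_X_add_C_pow]
  rcases le_or_gt j N with hj | hj
  · have h2 : N + (N - j) = j + 2 * (N - j) := by omega
    rw [← mul_assoc, ← pow_add, h2, pow_add, pow_mul]
    norm_num
  · simp [Nat.choose_eq_zero_of_lt hj]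

lemma conv_eval (N : ℕ) (g : ℕ → ℝ) :
    ∑ i ∈ range (N+1), ∑ j ∈ range (N+1),
      (N.choose i : ℝ) * ((-1 : ℝ)^j * (N.choose j : ℝ)) * g (i+j)
    = ∑ k ∈ range (N+1), (-1 : ℝ)^k * (N.choose k : ℝ) * g (2*k) := by
  set f : ℕ × ℕ → ℝ := fun p =>
    (N.choose p.1 : ℝ) * ((-1 : ℝ)^p.2 * (N.choose p.2 : ℝ)) * g (p.1+p.2) with hf
  have step1 :
      ∑ i ∈ range (N+1), ∑ j ∈ range (N+1),
        (N.choose i : ℝ) * ((-1 : ℝ)^j * (N.choose j : ℝ)) * g (i+j)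
      = ∑ p ∈ (range (2*N+1) ×ˢ range (2*N+1)).filter (fun p => p.1 + p.2 ≤ 2*N), f p := by
    rw [← Finset.sum_product']
    apply Finset.sum_subset
    · intro p hp
      simp only [mem_product, mem_range] at hp
      simp only [mem_filter, mem_product, mem_range]
      omega
    · intro p hp hnp
      simp only [mem_filter, mem_product, mem_range] at hp
      simp only [mem_product, mem_range] at hnp
      have : N < p.1 ∨ N < p.2 := by omega
      rcases this with h | h <;>
        simp [hf, Nat.choose_eq_zero_of_lt h]
  have step2 :
      ∑ p ∈ (range (2*N+1) ×ˢ range (2*N+1)).filter (fun p => p.1 + p.2 ≤ 2*N), f p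
      = ∑ m ∈ range (2*N+1), ∑ p ∈ Finset.HasAntidiagonal.antidiagonal m, f p := by
    rw [Finset.sum_sigma']
    apply Finset.sum_nbij' (fun p => (⟨p.1 + p.2, p⟩ : (_ : ℕ) × ℕ × ℕ)) (fun x => x.2)
    · intro p hp
      simp only [mem_filter, mem_product, mem_range] at hp
      refine mem_sigma.2 ⟨mem_range.2 (by show p.1 + p.2 < 2*N+1; omega), Finset.HasAntidiagonal.mem_antidiagonal.2 rfl⟩
    · intro x hx
      simp only [mem_sigma, mem_range, Finset.HasAntidiagonal.mem_antidiagonal] at hx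
      simp only [mem_filter, mem_product, mem_range]
      omega
    · intro p hp; rfl
    · intro x hx
      simp only [mem_sigma, mem_range, Finset.HasAntidiagonal.mem_antidiagonal] at hx
      exact Sigma.ext (by simp [hx.2]) (by simp)
    · intro p hp; rfl
  have step3 : ∀ m, ∑ p ∈ Finset.HasAntidiagonal.antidiagonal m, f p
      = (((1 - X^2 : Polynomial ℝ))^N).coeff m * g m := by
    intro m
    have : (((1 - X^2 : Polynomial ℝ))^N) = (1 + X)^N * (1 - X)^N := by
      rw [← mul_pow]; congr 1; ring
    rw [this, coeff_mul, Finset.sum_mul]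
    apply Finset.sum_congr rfl
    intro p hp
    rw [Finset.HasAntidiagonal.mem_antidiagonal] at hp
    rw [coeff_one_add_X_pow, coeff_one_sub_X_pow', hf]
    simp [hp, mul_assoc]
  have step4 : ∀ m, (((1 - X^2 : Polynomial ℝ))^N).coeff m
      = ∑ k ∈ range (N+1), ((-1 : ℝ)^k * (N.choose k : ℝ)) * (if m = 2*k then (1:ℝ) else 0) := by
    intro m
    have hrw : ((1 - X^2 : Polynomial ℝ))^N
        = ∑ k ∈ range (N+1), C ((-1 : ℝ)^k * (N.choose k : ℝ)) * X^(2*k) := by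
      have : (1 - X^2 : Polynomial ℝ) = (-X^2) + 1 := by ring
      rw [this, add_pow]
      apply Finset.sum_congr rfl
      intro k hk
      rw [neg_pow, ← pow_mul]
      rw [C_mul, C_pow]
      ring_nf
      simp [C_neg]
      ring
    rw [hrw, finset_sum_coeff]
    apply Finset.sum_congr rfl
    intro k hk
    rw [coeff_C_mul, coeff_X_pow]
  rw [step1, step2]
  simp_rw [step3, step4, Finset.sum_mul]
  rw [Finset.sum_comm]
  apply Finset.sum_congr rfl
  intro k hk
  rw [mem_range] at hk
  rw [Finset.sum_eq_single (2*k)]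
  · simp
  · intro m hm hne; simp [hne]
  · intro h
    exfalso; apply h; rw [mem_range]; omega

/-- Two-scale refinement relation of the cardinal B-spline. -/
theorem cardinalBSpline_refinement (n : ℕ) (t : ℝ) :
    cardinalBSpline n t
      = (1 / 2 ^ n) * ∑ r ∈ Finset.range (n + 2),
          ((n + 1).choose r : ℝ) * cardinalBSpline n (2 * t - r) := by
  set g : ℕ → ℝ := fun m => (max 0 (t - (m : ℝ)/2))^n with hg
  have key := conv_eval (n+1) g
  unfold cardinalBSpline
  have hterm : ∀ r s : ℕ, (max 0 (2 * t - (r:ℝ) - (s:ℝ)))^n = 2^n * g (r + s) := by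
    intro r s
    have h1 : 2 * t - (r:ℝ) - (s:ℝ) = 2 * (t - ((r+s : ℕ) : ℝ)/2) := by
      push_cast; ring
    rw [hg, h1]
    show (0 ⊔ 2*(t - ((r+s:ℕ):ℝ)/2))^n = 2^n * (0 ⊔ (t - ((r+s:ℕ):ℝ)/2))^n
    rw [← mul_pow, mul_max_of_nonneg _ _ (by norm_num : (0:ℝ) ≤ 2), mul_zero]
  calc (1 / (n.factorial : ℝ)) * ∑ r ∈ Finset.range (n + 2),
        ((-1 : ℝ) ^ r * ((n + 1).choose r : ℝ)) * (max 0 (t - r)) ^ n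
      = (1 / (n.factorial : ℝ)) * ∑ k ∈ Finset.range (n + 2),
        (-1 : ℝ)^k * ((n+1).choose k : ℝ) * g (2*k) := by
        congr 1
        apply Finset.sum_congr rfl
        intro k hk
        rw [hg]
        congr 3
        push_cast; ring
    _ = (1 / (n.factorial : ℝ)) * ∑ r ∈ Finset.range (n + 2), ∑ s ∈ Finset.range (n + 2),
        ((n+1).choose r : ℝ) * ((-1 : ℝ)^s * ((n+1).choose s : ℝ)) * g (r+s) := by
        rw [key]
    _ = (1 / 2 ^ n) * ∑ r ∈ Finset.range (n + 2),
          ((n + 1).choose r : ℝ) * ((1 / (n.factorial : ℝ)) * ∑ s ∈ Finset.range (n + 2),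
            ((-1 : ℝ) ^ s * ((n + 1).choose s : ℝ)) * (max 0 (2 * t - r - s)) ^ n) := by
        rw [Finset.mul_sum, Finset.mul_sum]
        apply Finset.sum_congr rfl
        intro r hr
        rw [Finset.mul_sum, Finset.mul_sum, Finset.mul_sum, Finset.mul_sum]
        apply Finset.sum_congr rfl
        intro s hs
        rw [hterm r s]
        field_simp
end
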